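/- The Voronoi cell V_Λ = {x ∈ ℝ^d : |x| ≤ |x−a| for all a ∈ Λ} of a full-dimensional lattice Λ ⊂ ℝ^d is lattice complete with respect to Λ, and its polar (V_Λ)* is lattice reduced with respect to the dual lattice Λ*. -/

import Mathlib

open scoped Pointwise

noncomputable section

/-- Standard dot product on `Fin d → ℝ`. -/
def dot {d : ℕ} (x y : Fin d → ℝ) : ℝ := ∑ i, x i * y i

/-- A convex body: convex, compact, with nonempty interior. -/
def IsConvexBody {d : ℕ} (C : Set (Fin d → ℝ)) : Prop :=
  Convex ℝ C ∧ IsCompact C ∧ (interior C).Nonempty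

/-- A full-dimensional lattice: the integer span of a basis of `ℝ^d`. -/
def IsLattice {d : ℕ} (L : Set (Fin d → ℝ)) : Prop :=
  ∃ B : Module.Basis (Fin d) ℝ (Fin d → ℝ),
    L = Set.range (fun z : Fin d → ℤ => ∑ i, (z i : ℝ) • B i)

/-- The dual lattice: vectors pairing integrally with all lattice vectors. -/
def dualLattice {d : ℕ} (L : Set (Fin d → ℝ)) : Set (Fin d → ℝ) :=
  {y | ∀ x ∈ L, ∃ n : ℤ, dot x y = (n : ℝ)}

/-- Width of `C` in direction `y`: `sup_{a,b ∈ C} y·(a-b)`. -/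
def widthDir {d : ℕ} (C : Set (Fin d → ℝ)) (y : Fin d → ℝ) : ℝ :=
  sSup {r | ∃ a ∈ C, ∃ b ∈ C, r = dot y (a - b)}

/-- Lattice width of `C` with respect to a lattice `L`. -/
def latticeWidth {d : ℕ} (C L : Set (Fin d → ℝ)) : ℝ :=
  sInf {w | ∃ y ∈ dualLattice L, y ≠ 0 ∧ w = widthDir C y}

/-- A primitive lattice vector: a nonzero lattice vector such that no proper
fraction of it is a lattice vector. -/
def IsPrimitiveVec {d : ℕ} (L : Set (Fin d → ℝ)) (v : Fin d → ℝ) : Prop :=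
  v ∈ L ∧ v ≠ 0 ∧ ∀ t : ℝ, 0 < t → t < 1 → t • v ∉ L

/-- Lattice diameter of `C` w.r.t. `L`: the supremum of lattice lengths of
lattice segments contained in `C`, a segment of lattice length `t` being one of
the form `[a, a + t • v]` with `v` primitive in `L`. -/
def latticeDiam {d : ℕ} (C L : Set (Fin d → ℝ)) : ℝ :=
  sSup {t : ℝ | 0 ≤ t ∧ ∃ a v, IsPrimitiveVec L v ∧ segment ℝ a (a + t • v) ⊆ C}

/-- The polar body `K* = {y : x·y ≤ 1 ∀ x ∈ K}`. -/
def polarBody {d : ℕ} (K : Set (Fin d → ℝ)) : Set (Fin d → ℝ) :=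
  {y | ∀ x ∈ K, dot x y ≤ 1}

/-- First successive minimum of `K` w.r.t. the lattice `L`. -/
def lambda1 {d : ℕ} (K L : Set (Fin d → ℝ)) : ℝ :=
  sInf {r : ℝ | 0 ≤ r ∧ ∃ x ∈ L, x ≠ 0 ∧ x ∈ r • K}

/-- The difference body `C - C`. -/
def diffBody {d : ℕ} (C : Set (Fin d → ℝ)) : Set (Fin d → ℝ) := C - C

/-- `C` is lattice reduced w.r.t. `L`: it is a convex body and no convex body
properly contained in it has the same lattice width. -/
def IsLatticeReduced {d : ℕ} (C L : Set (Fin d → ℝ)) : Prop :=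
  IsConvexBody C ∧ ∀ C', IsConvexBody C' → C' ⊂ C → latticeWidth C' L ≠ latticeWidth C L

/-- `C` is lattice complete w.r.t. `L`: it is a convex body and no convex body
properly containing it has the same lattice diameter. -/
def IsLatticeComplete {d : ℕ} (C L : Set (Fin d → ℝ)) : Prop :=
  IsConvexBody C ∧ ∀ C', IsConvexBody C' → C ⊂ C' → latticeDiam C' L ≠ latticeDiam C L

/-- A width direction of `C`: a nonzero dual lattice vector realizing the
lattice width. -/
def IsWidthDirection {d : ℕ} (C L : Set (Fin d → ℝ)) (y : Fin d → ℝ) : Prop :=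
  y ∈ dualLattice L ∧ y ≠ 0 ∧ widthDir C y = latticeWidth C L

/-- A diameter direction of `C`: a primitive lattice vector parallel to a
lattice segment in `C` of maximal lattice length. -/
def IsDiameterDirection {d : ℕ} (C L : Set (Fin d → ℝ)) (v : Fin d → ℝ) : Prop :=
  IsPrimitiveVec L v ∧ ∃ a, segment ℝ a (a + latticeDiam C L • v) ⊆ C

/-- A diameter segment of `C`: a lattice segment contained in `C` whose lattice
length equals the lattice diameter of `C`. -/
def IsDiameterSegment {d : ℕ} (C L : Set (Fin d → ℝ)) (a b : Fin d → ℝ) : Prop :=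
  segment ℝ a b ⊆ C ∧ ∃ v, IsPrimitiveVec L v ∧ b = a + latticeDiam C L • v

/-- A polytope: the convex hull of finitely many points. -/
def IsPolytope {d : ℕ} (C : Set (Fin d → ℝ)) : Prop :=
  ∃ V : Finset (Fin d → ℝ), C = convexHull ℝ (V : Set (Fin d → ℝ))

/-- A facet of a `d`-dimensional body: a face (extreme subset) of dimension `d-1`. -/
def IsFacetOf {d : ℕ} (P F : Set (Fin d → ℝ)) : Prop :=
  IsExtreme ℝ P F ∧ Module.finrank ℝ (vectorSpan ℝ F) + 1 = d

/-- The integer lattice `ℤ^d` inside `Fin d → ℝ`. -/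
def intLattice (d : ℕ) : Set (Fin d → ℝ) := {x | ∀ i, ∃ n : ℤ, x i = (n : ℝ)}

/-- The Voronoi cell of a lattice: points at least as close to the origin as to
any lattice point (squared Euclidean distances expressed via the dot product). -/
def voronoiCell {d : ℕ} (L : Set (Fin d → ℝ)) : Set (Fin d → ℝ) :=
  {x | ∀ a ∈ L, dot x x ≤ dot (x - a) (x - a)}

/-!
A lattice segment `[a, a + t • v]` in the Voronoi cell `V` has `t ≤ 1`, by adding the inequalities
of `V` for `-v` at `a` and for `v` at `a + t • v`; dually, since `L` is its own bidual, the polar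
`V*` has width at least `4` in every direction `a ∈ L`, because `±(2 / ‖a‖²) • a ∈ V*`.

Both bounds become strict under enlargement. If `x ∉ V`, a shortest lattice vector `v` whose
bisector separates `x` from `0` is primitive and `v / 2` lies in the relative interior of its facet
of `V`; so `conv (V ∪ {x})` contains `c • v` for some `c > 1 / 2`. A convex body `C ⊋ V` therefore
contains the lattice segment `[-v / 2, c • v]` of length `c + 1 / 2 > 1`. A convex body `C ⊊ V*`
is separated from a point of `V*` by a hyperplane, which yields such an `x` with `C` of width at
most `2` in direction `x`; then `C` has width at most `2 / c < 4` in direction `v`.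
-/

open Filter Topology Bornology

theorem dot_eq_dotProduct {d : ℕ} (x y : Fin d → ℝ) : dot x y = x ⬝ᵥ y := rfl

theorem Bornology.IsBounded.bddAbove_image_of_continuous {E : Type*} [PseudoMetricSpace E]
    [ProperSpace E] {s : Set E} (hs : IsBounded s) {f : E → ℝ} (hf : Continuous f) :
    BddAbove (f '' s) :=
  (hs.isCompact_closure.bddAbove_image hf.continuousOn).mono (Set.image_mono subset_closure)

section DotProduct

variable {ι : Type*} [Fintype ι]

theorem dotProduct_self_nonneg (x : ι → ℝ) : 0 ≤ x ⬝ᵥ x :=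
  Finset.sum_nonneg fun i _ => mul_self_nonneg (x i)

theorem dotProduct_self_pos {x : ι → ℝ} (hx : x ≠ 0) : 0 < x ⬝ᵥ x :=
  (dotProduct_self_nonneg x).lt_of_ne' (dotProduct_self_eq_zero.not.2 hx)

theorem two_mul_dotProduct_le_of_four_mul_le {a f : ι → ℝ} (h : 4 * (f ⬝ᵥ f) ≤ a ⬝ᵥ a) :
    2 * (a ⬝ᵥ f) ≤ a ⬝ᵥ a := by
  have := dotProduct_self_nonneg (a - (2 : ℝ) • f)
  simp only [sub_dotProduct, dotProduct_sub, smul_dotProduct, dotProduct_smul, smul_eq_mul,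
    dotProduct_comm f a] at this
  nlinarith

theorem convex_setOf_dotProduct_le (u : ι → ℝ) (r : ℝ) : Convex ℝ {z | u ⬝ᵥ z ≤ r} :=
  convex_halfSpace_le (dotProductBilin ℝ ℝ u).isLinear r

theorem continuous_dotProduct_left (a : ι → ℝ) : Continuous fun x : ι → ℝ => a ⬝ᵥ x := by
  unfold dotProduct; fun_prop

theorem continuous_dotProduct_self : Continuous fun x : ι → ℝ => x ⬝ᵥ x := by
  unfold dotProduct; fun_prop

theorem isBounded_setOf_dotProduct_self_le (R : ℝ) : IsBounded {x : ι → ℝ | x ⬝ᵥ x ≤ R} := by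
  refine isBounded_iff_forall_norm_le.2 ⟨max 1 R, fun x (hx : x ⬝ᵥ x ≤ R) => ?_⟩
  refine (pi_norm_le_iff_of_nonneg (le_max_of_le_left zero_le_one)).2 fun i => ?_
  have hi : x i * x i ≤ x ⬝ᵥ x :=
    Finset.single_le_sum (f := fun j => x j * x j) (fun j _ => mul_self_nonneg (x j))
      (Finset.mem_univ i)
  rw [Real.norm_eq_abs]
  rcases le_or_gt |x i| 1 with h1 | h1
  · exact le_max_of_le_left h1
  · nlinarith [abs_mul_abs_self (x i), le_max_right 1 R]

theorem exists_dotProduct_eq (φ : (ι → ℝ) →ₗ[ℝ] ℝ) : ∃ u : ι → ℝ, ∀ y, φ y = u ⬝ᵥ y := by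
  classical
  exact ⟨(dotProductEquiv ℝ ι).symm φ, fun y =>
    (LinearMap.congr_fun ((dotProductEquiv ℝ ι).apply_symm_apply φ) y).symm⟩

end DotProduct

namespace IsLattice

variable {d : ℕ} {L : Set (Fin d → ℝ)}

theorem exists_basis_eq_span (hL : IsLattice L) :
    ∃ b : Module.Basis (Fin d) ℝ (Fin d → ℝ), L = Submodule.span ℤ (Set.range b) := by
  obtain ⟨b, rfl⟩ := hL
  refine ⟨b, Set.ext fun x => ?_⟩
  simp only [Set.mem_range, SetLike.mem_coe, Submodule.mem_span_range_iff_exists_fun,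
    Int.cast_smul_eq_zsmul]

theorem neg_mem (hL : IsLattice L) {a : Fin d → ℝ} (ha : a ∈ L) : -a ∈ L := by
  obtain ⟨b, rfl⟩ := hL.exists_basis_eq_span
  exact Submodule.neg_mem _ ha

theorem sub_mem (hL : IsLattice L) {a c : Fin d → ℝ} (ha : a ∈ L) (hc : c ∈ L) : a - c ∈ L := by
  obtain ⟨b, rfl⟩ := hL.exists_basis_eq_span
  exact Submodule.sub_mem _ ha hc

theorem finite_setOf_dotProduct_self_le (hL : IsLattice L) (R : ℝ) :
    {a | a ∈ L ∧ a ⬝ᵥ a ≤ R}.Finite := by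
  obtain ⟨b, rfl⟩ := hL.exists_basis_eq_span
  exact (ZSpan.setFinite_inter b (isBounded_setOf_dotProduct_self_le R)).subset
    fun a ha => ⟨ha.2, ha.1⟩

theorem exists_sub_dotProduct_le (hL : IsLattice L) :
    ∃ R, ∀ x, ∃ a ∈ L, (x - a) ⬝ᵥ (x - a) ≤ R := by
  obtain ⟨b, rfl⟩ := hL.exists_basis_eq_span
  obtain ⟨R, hR⟩ := (ZSpan.fundamentalDomain_isBounded b).bddAbove_image_of_continuous
    continuous_dotProduct_self
  refine ⟨R, fun x => ⟨ZSpan.floor b x, (ZSpan.floor b x).2, ?_⟩⟩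
  rw [← ZSpan.fract_apply]
  exact hR ⟨_, ZSpan.fract_mem_fundamentalDomain b x, rfl⟩

theorem exists_min_dotProduct_self (hL : IsLattice L) {p : (Fin d → ℝ) → Prop}
    (h : ∃ a ∈ L, p a) : ∃ v ∈ L, p v ∧ ∀ a ∈ L, p a → v ⬝ᵥ v ≤ a ⬝ᵥ a := by
  obtain ⟨w, hwL, hw⟩ := h
  obtain ⟨v, ⟨hvL, hv, hvw⟩, hmin⟩ := Set.exists_min_image
    {a | a ∈ L ∧ p a ∧ a ⬝ᵥ a ≤ w ⬝ᵥ w} (fun a => a ⬝ᵥ a)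
    ((hL.finite_setOf_dotProduct_self_le (w ⬝ᵥ w)).subset fun a ha => ⟨ha.1, ha.2.2⟩)
    ⟨w, hwL, hw, le_rfl⟩
  refine ⟨v, hvL, hv, fun a haL ha => ?_⟩
  rcases le_or_gt (a ⬝ᵥ a) (w ⬝ᵥ w) with haw | haw
  · exact hmin a ⟨haL, ha, haw⟩
  · exact hvw.trans haw.le

theorem exists_pos_le_dotProduct_self (hL : IsLattice L) :
    ∃ c > 0, ∀ a ∈ L, a ≠ 0 → c ≤ a ⬝ᵥ a := by
  by_cases h : ∃ a ∈ L, a ≠ 0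
  · obtain ⟨v, -, hv, hmin⟩ := hL.exists_min_dotProduct_self h
    exact ⟨v ⬝ᵥ v, dotProduct_self_pos hv, hmin⟩
  · push Not at h
    exact ⟨1, one_pos, fun a ha ha0 => absurd (h a ha) ha0⟩

theorem dualLattice_coe (N : Submodule ℤ (Fin d → ℝ)) :
    dualLattice (N : Set (Fin d → ℝ)) =
      LinearMap.BilinForm.dualSubmodule (dotProductBilin ℝ ℝ) N := by
  ext y
  simp [dualLattice, dot_eq_dotProduct, LinearMap.BilinForm.mem_dualSubmodule, Submodule.mem_one,
    dotProduct_comm y, eq_comm]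

theorem dualLattice_dualLattice (hL : IsLattice L) : dualLattice (dualLattice L) = L := by
  obtain ⟨b, rfl⟩ := hL.exists_basis_eq_span
  rw [dualLattice_coe, dualLattice_coe, LinearMap.BilinForm.dualSubmodule_dualSubmodule_of_basis]
  · refine ⟨fun x hx => ?_, fun x hx => ?_⟩ <;> simpa using hx x
  · exact ⟨fun x y => dotProduct_comm x y⟩

end IsLattice

section ConvexBody

variable {d : ℕ}

theorem isConvexBody_of_mem_nhds_zero {K : Set (Fin d → ℝ)} (hconv : Convex ℝ K)
    (hclosed : IsClosed K) (hbdd : IsBounded K) (h0 : K ∈ 𝓝 0) : IsConvexBody K :=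
  ⟨hconv, Metric.isCompact_of_isClosed_isBounded hclosed hbdd, ⟨0, mem_interior_iff_mem_nhds.2 h0⟩⟩

theorem IsConvexBody.nonempty {C : Set (Fin d → ℝ)} (hC : IsConvexBody C) : C.Nonempty :=
  hC.2.2.mono interior_subset

theorem polarBody_eq_iInter (K : Set (Fin d → ℝ)) :
    polarBody K = ⋂ x ∈ K, {y | x ⬝ᵥ y ≤ 1} := by
  ext y
  simp [polarBody, dot_eq_dotProduct]

theorem convex_polarBody (K : Set (Fin d → ℝ)) : Convex ℝ (polarBody K) :=
  polarBody_eq_iInter K ▸ convex_iInter₂ fun x _ => convex_setOf_dotProduct_le x 1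

theorem isClosed_polarBody (K : Set (Fin d → ℝ)) : IsClosed (polarBody K) :=
  polarBody_eq_iInter K ▸ isClosed_biInter fun x _ =>
    isClosed_le (continuous_dotProduct_left x) continuous_const

theorem neg_mem_polarBody {K : Set (Fin d → ℝ)} (hK : ∀ x ∈ K, -x ∈ K) {y : Fin d → ℝ}
    (hy : y ∈ polarBody K) : -y ∈ polarBody K := fun x hx => by
  simpa [dot_eq_dotProduct] using hy (-x) (hK x hx)

theorem polarBody_mem_nhds_zero {K : Set (Fin d → ℝ)} (hK : IsBounded K) : polarBody K ∈ 𝓝 0 := by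
  have := hK.isCompact_closure.eventually_forall_of_forall_eventually (x₀ := 0)
    (P := fun y x => x ⬝ᵥ y < 1) fun x _ =>
      (Continuous.continuousAt (by unfold dotProduct; fun_prop)).eventually_lt
        continuousAt_const (by simp)
  filter_upwards [this] with y hy x hx using (hy x (subset_closure hx)).le

theorem isBounded_polarBody {K : Set (Fin d → ℝ)} (hK : K ∈ 𝓝 0) : IsBounded (polarBody K) := by
  obtain ⟨r, hr, hball⟩ := Metric.mem_nhds_iff.1 hK
  have hsingle : ∀ i (c : ℝ), |c| < r → Pi.single i c ∈ K := fun i c hc =>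
    hball (by simpa [Pi.norm_single] using hc)
  have hr2 : |r / 2| < r := by rw [abs_of_pos (half_pos hr)]; exact half_lt_self hr
  refine isBounded_iff_forall_norm_le.2 ⟨2 / r, fun y hy => ?_⟩
  refine (pi_norm_le_iff_of_nonneg (by positivity)).2 fun i => ?_
  have hpos := hy _ (hsingle i (r / 2) hr2)
  have hneg := hy _ (hsingle i (-(r / 2)) (by rwa [abs_neg]))
  simp only [dot_eq_dotProduct, single_dotProduct] at hpos hneg
  rw [Real.norm_eq_abs, abs_le, ← neg_div, div_le_iff₀ hr, le_div_iff₀ hr]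
  constructor <;> nlinarith

theorem isConvexBody_polarBody {K : Set (Fin d → ℝ)} (hbdd : IsBounded K) (h0 : K ∈ 𝓝 0) :
    IsConvexBody (polarBody K) :=
  isConvexBody_of_mem_nhds_zero (convex_polarBody K) (isClosed_polarBody K)
    (isBounded_polarBody h0) (polarBody_mem_nhds_zero hbdd)

/-- Separate a point `p` of the polar from `C` by a functional `u`: as `K` is symmetric, so is its
polar, and the width of `C` in direction `u` is smaller than that of the polar. -/
theorem exists_notMem_of_ssubset_polarBody {K C : Set (Fin d → ℝ)} (hK0 : K ∈ 𝓝 0)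
    (hKneg : ∀ x ∈ K, -x ∈ K) (hconv : Convex ℝ C) (hclosed : IsClosed C) (hne : C.Nonempty)
    (hCK : C ⊂ polarBody K) : ∃ x ∉ K, ∀ a ∈ C, ∀ b ∈ C, (a - b) ⬝ᵥ x ≤ 2 := by
  obtain ⟨p, hpK, hpC⟩ := Set.exists_of_ssubset hCK
  obtain ⟨φ, s, hφC, hφp⟩ := geometric_hahn_banach_closed_point hconv hclosed hpC
  obtain ⟨u, hu⟩ := exists_dotProduct_eq φ.toLinearMap
  simp only [ContinuousLinearMap.coe_coe] at hu
  simp only [hu] at hφC hφp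
  have hP : IsCompact (polarBody K) :=
    Metric.isCompact_of_isClosed_isBounded (isClosed_polarBody K) (isBounded_polarBody hK0)
  obtain ⟨q, hqP, hq⟩ := hP.exists_isMaxOn ⟨p, hpK⟩ (continuous_dotProduct_left u).continuousOn
  have hpq : u ⬝ᵥ p ≤ u ⬝ᵥ q := hq hpK
  have hneg : ∀ b ∈ C, -(u ⬝ᵥ b) ≤ u ⬝ᵥ q := fun b hb => by
    simpa using (hq (neg_mem_polarBody hKneg (hCK.subset hb)) : u ⬝ᵥ -b ≤ u ⬝ᵥ q)
  obtain ⟨c, hc⟩ := hne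
  have hpos : 0 < s + u ⬝ᵥ q := by linarith [hφC c hc, hneg c hc]
  refine ⟨(2 / (s + u ⬝ᵥ q)) • u, fun hx => ?_, fun a ha b hb => ?_⟩
  · have hxq : dot _ q ≤ 1 := hqP _ hx
    rw [dot_eq_dotProduct, smul_dotProduct, smul_eq_mul, div_mul_eq_mul_div, div_le_one hpos] at hxq
    linarith
  · rw [dotProduct_comm (a - b), smul_dotProduct, smul_eq_mul, dotProduct_sub, div_mul_eq_mul_div,
      div_le_iff₀ hpos]
    linarith [hφC a ha, hneg b hb]

end ConvexBody

section VoronoiCell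

variable {d : ℕ} {L : Set (Fin d → ℝ)}

theorem voronoiCell_eq_iInter (L : Set (Fin d → ℝ)) :
    voronoiCell L = ⋂ a ∈ L, {x | 2 * (a ⬝ᵥ x) ≤ a ⬝ᵥ a} := by
  ext x
  simp only [voronoiCell, dot_eq_dotProduct, sub_dotProduct, dotProduct_sub, Set.mem_ofPred_eq,
    Set.mem_iInter]
  exact forall₂_congr fun a _ => by rw [dotProduct_comm x a]; constructor <;> intro h <;> linarith

theorem mem_voronoiCell_iff {x : Fin d → ℝ} :
    x ∈ voronoiCell L ↔ ∀ a ∈ L, 2 * (a ⬝ᵥ x) ≤ a ⬝ᵥ a := by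
  simp [voronoiCell_eq_iInter]

theorem convex_voronoiCell (L : Set (Fin d → ℝ)) : Convex ℝ (voronoiCell L) :=
  voronoiCell_eq_iInter L ▸ convex_iInter₂ fun a _ =>
    convex_halfSpace_le ⟨fun x y => by simp [dotProduct_add, mul_add],
      fun c x => by simp [dotProduct_smul, mul_left_comm]⟩ _

theorem isClosed_voronoiCell (L : Set (Fin d → ℝ)) : IsClosed (voronoiCell L) :=
  voronoiCell_eq_iInter L ▸ isClosed_biInter fun a _ =>
    isClosed_le (continuous_const.mul (continuous_dotProduct_left a)) continuous_const

theorem IsLattice.neg_mem_voronoiCell (hL : IsLattice L) {x : Fin d → ℝ}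
    (hx : x ∈ voronoiCell L) : -x ∈ voronoiCell L := by
  rw [mem_voronoiCell_iff] at hx ⊢
  intro a ha
  simpa using hx (-a) (hL.neg_mem ha)

theorem IsLattice.voronoiCell_mem_nhds_zero (hL : IsLattice L) : voronoiCell L ∈ 𝓝 0 := by
  obtain ⟨c, hc, hmin⟩ := hL.exists_pos_le_dotProduct_self
  have hopen : IsOpen {x : Fin d → ℝ | 4 * (x ⬝ᵥ x) < c} :=
    isOpen_lt (continuous_const.mul continuous_dotProduct_self) continuous_const
  refine Filter.mem_of_superset (hopen.mem_nhds (by simpa using hc)) fun x hx => ?_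
  refine mem_voronoiCell_iff.2 fun a ha => ?_
  rcases eq_or_ne a 0 with rfl | ha0
  · simp
  · exact two_mul_dotProduct_le_of_four_mul_le (hx.le.trans (hmin a ha ha0))

theorem IsLattice.isBounded_voronoiCell (hL : IsLattice L) : IsBounded (voronoiCell L) := by
  obtain ⟨R, hR⟩ := hL.exists_sub_dotProduct_le
  refine (isBounded_setOf_dotProduct_self_le R).subset fun x hx => ?_
  obtain ⟨a, ha, hxa⟩ := hR x
  exact (hx a ha).trans hxa

theorem IsLattice.isConvexBody_voronoiCell (hL : IsLattice L) : IsConvexBody (voronoiCell L) :=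
  isConvexBody_of_mem_nhds_zero (convex_voronoiCell L) (isClosed_voronoiCell L)
    hL.isBounded_voronoiCell hL.voronoiCell_mem_nhds_zero

end VoronoiCell

section ShortestSeparatingVec

variable {d : ℕ} {L : Set (Fin d → ℝ)} {x v : Fin d → ℝ}

/-- `v` is a shortest lattice vector whose bisecting hyperplane separates `x` from the origin. -/
def IsShortestSeparatingVec (L : Set (Fin d → ℝ)) (x v : Fin d → ℝ) : Prop :=
  v ∈ L ∧ v ⬝ᵥ v < 2 * (v ⬝ᵥ x) ∧ ∀ a ∈ L, a ⬝ᵥ a < 2 * (a ⬝ᵥ x) → v ⬝ᵥ v ≤ a ⬝ᵥ a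

theorem IsLattice.exists_isShortestSeparatingVec (hL : IsLattice L) (hx : x ∉ voronoiCell L) :
    ∃ v, IsShortestSeparatingVec L x v :=
  hL.exists_min_dotProduct_self (by simpa [mem_voronoiCell_iff] using hx)

theorem IsShortestSeparatingVec.isPrimitiveVec (hv : IsShortestSeparatingVec L x v) :
    IsPrimitiveVec L v := by
  obtain ⟨hvL, hvx, hmin⟩ := hv
  have hv0 : v ≠ 0 := by rintro rfl; simp at hvx
  have hvv := dotProduct_self_pos hv0
  refine ⟨hvL, hv0, fun t ht0 ht1 htv => ?_⟩
  have hle := hmin _ htv (by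
    simp only [smul_dotProduct, dotProduct_smul, smul_eq_mul]
    nlinarith [mul_pos (mul_pos ht0 (sub_pos.2 ht1)) hvv])
  simp only [smul_dotProduct, dotProduct_smul, smul_eq_mul] at hle
  nlinarith [mul_pos (mul_pos ht0 (sub_pos.2 ht1)) hvv]

/-- Otherwise `‖a‖² + ‖v - a‖² ≤ ‖v‖²`, and one of the shorter lattice vectors `a`, `v - a`
would also separate `x` from the origin. -/
theorem IsShortestSeparatingVec.dotProduct_lt (hL : IsLattice L)
    (hv : IsShortestSeparatingVec L x v) {a : Fin d → ℝ} (ha : a ∈ L) (ha0 : a ≠ 0)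
    (hav : a ≠ v) : a ⬝ᵥ v < a ⬝ᵥ a := by
  obtain ⟨hvL, hvx, hmin⟩ := hv
  by_contra! hle
  have hbb : (v - a) ⬝ᵥ (v - a) = v ⬝ᵥ v - 2 * (a ⬝ᵥ v) + a ⬝ᵥ a := by
    simp only [sub_dotProduct, dotProduct_sub, dotProduct_comm v a]; ring
  have hbx : (v - a) ⬝ᵥ x = v ⬝ᵥ x - a ⬝ᵥ x := sub_dotProduct v a x
  have haa := dotProduct_self_pos ha0
  have hb_pos := dotProduct_self_pos (sub_ne_zero.2 hav.symm)
  by_cases hax : a ⬝ᵥ a < 2 * (a ⬝ᵥ x)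
  · linarith [hmin a ha hax]
  · linarith [hmin _ (hL.sub_mem hvL ha) (by linarith)]

/-- `v / 2` lies in the relative interior of the facet of the Voronoi cell cut out by `v`. -/
theorem IsShortestSeparatingVec.eventually_mem_voronoiCell (hL : IsLattice L)
    (hv : IsShortestSeparatingVec L x v) :
    ∀ᶠ y in 𝓝 ((1 / 2 : ℝ) • v), 2 * (v ⬝ᵥ y) ≤ v ⬝ᵥ v → y ∈ voronoiCell L := by
  set p := (1 / 2 : ℝ) • v
  set Q := p ⬝ᵥ p + 1
  set T := {a | a ∈ L ∧ a ≠ 0 ∧ a ≠ v ∧ a ⬝ᵥ a ≤ 4 * Q}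
  have hT : T.Finite :=
    (hL.finite_setOf_dotProduct_self_le (4 * Q)).subset fun a ha => ⟨ha.1, ha.2.2.2⟩
  have hnear : ∀ᶠ y in 𝓝 p, y ⬝ᵥ y < Q :=
    continuous_dotProduct_self.continuousAt.eventually_lt continuousAt_const (lt_add_one _)
  have hinner : ∀ᶠ y in 𝓝 p, ∀ a ∈ T, 2 * (a ⬝ᵥ y) < a ⬝ᵥ a :=
    (eventually_all_finite hT).2 fun a ha =>
      (continuous_const.mul (continuous_dotProduct_left a)).continuousAt.eventually_lt
        continuousAt_const
        (by simpa [p, dotProduct_smul] using hv.dotProduct_lt hL ha.1 ha.2.1 ha.2.2.1)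
  filter_upwards [hnear, hinner] with y hyQ hyT hyv
  refine mem_voronoiCell_iff.2 fun a ha => ?_
  by_cases ha0 : a = 0
  · simp [ha0]
  by_cases hav : a = v
  · exact hav ▸ hyv
  by_cases haQ : a ⬝ᵥ a ≤ 4 * Q
  · exact (hyT a ⟨ha, ha0, hav, haQ⟩).le
  · exact two_mul_dotProduct_le_of_four_mul_le (by linarith)

/-- The points `f s = v / 2 - s • w`, with `w` the component of `x` orthogonal to `v`, stay on the
hyperplane of the facet of `v`, hence in the Voronoi cell for small `s > 0`; the segment from
`f s` to `x` meets the ray through `v` at `((1 / 2 + s t) / (1 + s)) • v`, beyond `v / 2`. -/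
theorem IsLattice.exists_smul_mem_convexHull_insert (hL : IsLattice L) (hx : x ∉ voronoiCell L) :
    ∃ v, IsPrimitiveVec L v ∧ (1 / 2 : ℝ) • v ∈ voronoiCell L ∧
      ∃ c > (1 / 2 : ℝ), c • v ∈ convexHull ℝ (insert x (voronoiCell L)) := by
  obtain ⟨v, hv⟩ := hL.exists_isShortestSeparatingVec hx
  have hvv := dotProduct_self_pos hv.isPrimitiveVec.2.1
  have hfacet := hv.eventually_mem_voronoiCell hL
  set t := v ⬝ᵥ x / v ⬝ᵥ v
  have ht : 1 / 2 < t := by rw [lt_div_iff₀ hvv]; linarith [hv.2.1]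
  set w := x - t • v
  set f : ℝ → Fin d → ℝ := fun s => (1 / 2 : ℝ) • v - s • w
  have hfv : ∀ s, 2 * (v ⬝ᵥ f s) = v ⬝ᵥ v := fun s => by
    simp only [f, w, t, dotProduct_sub, dotProduct_smul, smul_eq_mul]
    field_simp
    ring
  have hf : Tendsto f (𝓝[>] 0) (𝓝 ((1 / 2 : ℝ) • v)) :=
    ((show Continuous f by fun_prop).tendsto' 0 _ (by simp [f])).mono_left nhdsWithin_le_nhds
  obtain ⟨s, hsV, hs⟩ := ((hf.eventually hfacet).and self_mem_nhdsWithin).exists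
  refine ⟨v, hv.isPrimitiveVec, hfacet.self_of_nhds (by simp), (1 / 2 + s * t) / (1 + s),
    ?_, segment_subset_convexHull (Set.mem_insert_of_mem _ (hsV (hfv s).le)) (Set.mem_insert x _)
      ⟨1 / (1 + s), s / (1 + s), by positivity, by positivity, by field_simp, ?_⟩⟩
  · rw [gt_iff_lt, lt_div_iff₀ (by positivity)]
    nlinarith [mul_lt_mul_of_pos_left ht (Set.mem_Ioi.1 hs)]
  · simp only [f, w]
    match_scalars <;> field_simp <;> ring

end ShortestSeparatingVec

section LatticeDiameter

variable {d : ℕ} {C L : Set (Fin d → ℝ)}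

theorem IsLattice.le_latticeDiam (hL : IsLattice L) (hC : IsBounded C) {a v : Fin d → ℝ} {t : ℝ}
    (ht : 0 ≤ t) (hv : IsPrimitiveVec L v) (hseg : segment ℝ a (a + t • v) ⊆ C) :
    t ≤ latticeDiam C L := by
  obtain ⟨c, hc, hmin⟩ := hL.exists_pos_le_dotProduct_self
  obtain ⟨R, hR⟩ := (hC.sub hC).bddAbove_image_of_continuous continuous_dotProduct_self
  refine le_csSup ⟨max 1 (R / c), ?_⟩ ⟨ht, a, v, hv, hseg⟩
  rintro s ⟨hs, a, w, ⟨hwL, hw0, -⟩, hseg⟩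
  have hsw : (s • w) ⬝ᵥ (s • w) ≤ R := hR ⟨s • w,
    ⟨a + s • w, hseg (right_mem_segment ℝ _ _), a, hseg (left_mem_segment ℝ _ _),
      add_sub_cancel_left a _⟩, rfl⟩
  simp only [smul_dotProduct, dotProduct_smul, smul_eq_mul] at hsw
  rcases le_or_gt s 1 with hs1 | hs1
  · exact le_max_of_le_left hs1
  · refine le_max_of_le_right ((le_div_iff₀ hc).2 ?_)
    nlinarith [mul_le_mul_of_nonneg_left (hmin w hwL hw0) (mul_nonneg hs hs),
      mul_lt_mul_of_pos_right hs1 (mul_pos (zero_lt_one.trans hs1) hc)]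

theorem IsLattice.latticeDiam_voronoiCell_le_one (hL : IsLattice L) :
    latticeDiam (voronoiCell L) L ≤ 1 := by
  refine Real.sSup_le ?_ zero_le_one
  rintro t ⟨-, a, v, ⟨hvL, hv0, -⟩, hseg⟩
  have ha := mem_voronoiCell_iff.1 (hseg (left_mem_segment ℝ _ _)) (-v) (hL.neg_mem hvL)
  have hb := mem_voronoiCell_iff.1 (hseg (right_mem_segment ℝ _ _)) v hvL
  simp only [neg_dotProduct, dotProduct_neg, neg_neg, dotProduct_add, dotProduct_smul,
    smul_eq_mul] at ha hb
  nlinarith [dotProduct_self_pos hv0]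

theorem IsLattice.isLatticeComplete_voronoiCell (hL : IsLattice L) :
    IsLatticeComplete (voronoiCell L) L := by
  refine ⟨hL.isConvexBody_voronoiCell, fun C hC hVC => ?_⟩
  obtain ⟨x, hxC, hxV⟩ := Set.exists_of_ssubset hVC
  obtain ⟨v, hv, hhalf, c, hc, hcv⟩ := hL.exists_smul_mem_convexHull_insert hxV
  have hcvC : c • v ∈ C := convexHull_min (Set.insert_subset hxC hVC.subset) hC.1 hcv
  have hseg : segment ℝ (-((1 / 2 : ℝ) • v)) (-((1 / 2 : ℝ) • v) + (c + 1 / 2) • v) ⊆ C := by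
    rw [show -((1 / 2 : ℝ) • v) + (c + 1 / 2) • v = c • v by module]
    exact hC.1.segment_subset (hVC.subset (hL.neg_mem_voronoiCell hhalf)) hcvC
  have hCv := hL.le_latticeDiam hC.2.1.isBounded (by linarith) hv hseg
  exact (by linarith [hL.latticeDiam_voronoiCell_le_one] : latticeDiam _ L < _).ne'

end LatticeDiameter

section LatticeWidth

variable {d : ℕ} {C L : Set (Fin d → ℝ)}

theorem widthDir_nonneg (hC : C.Nonempty) (y : Fin d → ℝ) : 0 ≤ widthDir C y := by
  obtain ⟨a, ha⟩ := hC
  by_cases hbdd : BddAbove {r | ∃ a ∈ C, ∃ b ∈ C, r = dot y (a - b)}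
  · exact le_csSup hbdd ⟨a, ha, a, ha, by simp [dot_eq_dotProduct]⟩
  · exact (Real.sSup_of_not_bddAbove hbdd).ge

theorem le_widthDir (hC : IsBounded C) {a b : Fin d → ℝ} (ha : a ∈ C) (hb : b ∈ C)
    (y : Fin d → ℝ) : y ⬝ᵥ (a - b) ≤ widthDir C y := by
  obtain ⟨R, hR⟩ := (hC.sub hC).bddAbove_image_of_continuous (continuous_dotProduct_left y)
  refine le_csSup ⟨R, ?_⟩ ⟨a, ha, b, hb, rfl⟩
  rintro _ ⟨a, ha, b, hb, rfl⟩
  exact hR ⟨a - b, Set.sub_mem_sub ha hb, rfl⟩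

theorem widthDir_le (hC : C.Nonempty) {y : Fin d → ℝ} {r : ℝ}
    (h : ∀ a ∈ C, ∀ b ∈ C, y ⬝ᵥ (a - b) ≤ r) : widthDir C y ≤ r := by
  obtain ⟨c, hc⟩ := hC
  refine csSup_le ⟨_, c, hc, c, hc, rfl⟩ ?_
  rintro _ ⟨a, ha, b, hb, rfl⟩
  exact h a ha b hb

theorem latticeWidth_le_widthDir (hC : C.Nonempty) {y : Fin d → ℝ} (hy : y ∈ dualLattice L)
    (hy0 : y ≠ 0) : latticeWidth C L ≤ widthDir C y := by
  refine csInf_le ⟨0, ?_⟩ ⟨y, hy, hy0, rfl⟩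
  rintro _ ⟨y, -, -, rfl⟩
  exact widthDir_nonneg hC y

theorem le_latticeWidth {r : ℝ} (hne : ∃ y ∈ dualLattice L, y ≠ 0)
    (h : ∀ y ∈ dualLattice L, y ≠ 0 → r ≤ widthDir C y) : r ≤ latticeWidth C L := by
  obtain ⟨y, hy, hy0⟩ := hne
  refine le_csInf ⟨_, y, hy, hy0, rfl⟩ ?_
  rintro _ ⟨y, hy, hy0, rfl⟩
  exact h y hy hy0

/-- `±(2 / ‖a‖²) • a` lie in the polar of the Voronoi cell. -/
theorem IsLattice.four_le_widthDir_polarBody_voronoiCell (hL : IsLattice L) {a : Fin d → ℝ}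
    (ha : a ∈ L) (ha0 : a ≠ 0) : 4 ≤ widthDir (polarBody (voronoiCell L)) a := by
  have haa := dotProduct_self_pos ha0
  have hp : (2 / (a ⬝ᵥ a)) • a ∈ polarBody (voronoiCell L) := fun x hx => by
    have := mem_voronoiCell_iff.1 hx a ha
    rwa [dot_eq_dotProduct, dotProduct_smul, smul_eq_mul, div_mul_eq_mul_div, div_le_one haa,
      dotProduct_comm x]
  have := le_widthDir (isBounded_polarBody hL.voronoiCell_mem_nhds_zero) hp
    (neg_mem_polarBody (fun _ => hL.neg_mem_voronoiCell) hp) a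
  rw [sub_neg_eq_add, dotProduct_add, dotProduct_smul, smul_eq_mul, div_mul_cancel₀ _ haa.ne']
    at this
  linarith

theorem IsLattice.four_le_latticeWidth_polarBody_voronoiCell (hL : IsLattice L)
    (hne : ∃ a ∈ L, a ≠ 0) : 4 ≤ latticeWidth (polarBody (voronoiCell L)) (dualLattice L) :=
  le_latticeWidth (by rwa [hL.dualLattice_dualLattice]) fun a ha ha0 =>
    hL.four_le_widthDir_polarBody_voronoiCell (hL.dualLattice_dualLattice ▸ ha) ha0

theorem IsLattice.dotProduct_sub_le_two_of_mem_convexHull (hL : IsLattice L)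
    (hCP : C ⊆ polarBody (voronoiCell L)) {x z : Fin d → ℝ}
    (hxC : ∀ a ∈ C, ∀ b ∈ C, (a - b) ⬝ᵥ x ≤ 2) (hz : z ∈ convexHull ℝ (insert x (voronoiCell L)))
    {a b : Fin d → ℝ} (ha : a ∈ C) (hb : b ∈ C) : (a - b) ⬝ᵥ z ≤ 2 := by
  refine convexHull_min (t := {y | (a - b) ⬝ᵥ y ≤ 2})
    (Set.insert_subset (hxC a ha b hb) fun y hy => ?_) (convex_setOf_dotProduct_le (a - b) 2) hz
  have hya : dot y a ≤ 1 := hCP ha y hy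
  have hyb : dot (-y) b ≤ 1 := hCP hb (-y) (hL.neg_mem_voronoiCell hy)
  simp only [dot_eq_dotProduct, neg_dotProduct] at hya hyb
  simp only [Set.mem_ofPred_eq, sub_dotProduct, dotProduct_comm a, dotProduct_comm b]
  linarith

theorem IsLattice.isLatticeReduced_polarBody_voronoiCell (hL : IsLattice L) :
    IsLatticeReduced (polarBody (voronoiCell L)) (dualLattice L) := by
  refine ⟨isConvexBody_polarBody hL.isBounded_voronoiCell hL.voronoiCell_mem_nhds_zero,
    fun C hC hCP => ?_⟩
  obtain ⟨x, hxV, hxC⟩ := exists_notMem_of_ssubset_polarBody hL.voronoiCell_mem_nhds_zero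
    (fun _ => hL.neg_mem_voronoiCell) hC.1 hC.2.1.isClosed hC.nonempty hCP
  obtain ⟨v, ⟨hvL, hv0, -⟩, -, c, hc, hcv⟩ := hL.exists_smul_mem_convexHull_insert hxV
  have hwidth : widthDir C v ≤ 2 / c := widthDir_le hC.nonempty fun a ha b hb => by
    have := hL.dotProduct_sub_le_two_of_mem_convexHull hCP.subset hxC hcv ha hb
    rw [dotProduct_smul, smul_eq_mul, dotProduct_comm] at this
    rwa [le_div_iff₀ (by linarith), mul_comm]
  have hCv := latticeWidth_le_widthDir hC.nonempty (hL.dualLattice_dualLattice.symm ▸ hvL) hv0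
  have hP := hL.four_le_latticeWidth_polarBody_voronoiCell ⟨v, hvL, hv0⟩
  have hc4 : 2 / c < 4 := by rw [div_lt_iff₀ (by linarith)]; linarith
  exact (by linarith : latticeWidth C (dualLattice L) < _).ne

end LatticeWidth

/-- the Voronoi cell of a lattice is lattice complete w.r.t. the
lattice, and its polar is lattice reduced w.r.t. the dual lattice. -/
theorem voronoiCell_complete_and_polar_reduced {d : ℕ} (L : Set (Fin d → ℝ))
    (hL : IsLattice L) :
    IsLatticeComplete (voronoiCell L) L ∧
    IsLatticeReduced (polarBody (voronoiCell L)) (dualLattice L) :=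
  ⟨hL.isLatticeComplete_voronoiCell, hL.isLatticeReduced_polarBody_voronoiCell⟩
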